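/- Let n ≥ k, d ≥ k, t ≥ 0 and s > 0. Suppose (i) every singular value σ_i of R' = ΦᵀR satisfies |σ_i − 1| ≤ (√k + t)/√d, and (ii) the optimal SC assignment X*_Φ partitions {1,…,n} into nonempty clusters each with within-cluster cost Σ_{i∈c_j} ‖φ_i − μ_j‖₂² ≥ s (φ_i the i-th row of Φ, μ_j the centroid of cluster j). Then C_Ψ ≤ C_Φ · (1 + 2(√k + t)/√(s·d)). -/

import Mathlib

/-!
Write `R' = Φᵀ R`. Since `Ψ = Φ R'`, the k-means residual of any assignment `X` on `Ψ` is the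
residual `(I - X Xᵀ) Φ` on `Φ` multiplied by `R'`, so its Frobenius norm is squeezed between
`1 - ε` and `1 + ε` times `C_Φ(X)`, where `ε = (√k + t)/√d` bounds the deviation of the singular
values of `R'` from `1`. Optimality of `X*_Ψ` for `Ψ` then gives `(1 - ε) C_Ψ ≤ (1 + ε) C_Φ`,
i.e. `C_Ψ ≤ C_Φ + ε (C_Ψ + C_Φ)`. Both costs are at most `‖Φ‖_F = √k`, and the spread condition
gives `C_Φ² ≥ k s`, so `√k ≤ C_Φ / √s`.
-/

open Matrix MeasureTheory ProbabilityTheory Finset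

noncomputable section

/-- The `a × b` matrix with ones on the main diagonal and zeros elsewhere. -/
def rectId (a b : ℕ) : Matrix (Fin a) (Fin b) ℝ :=
  Matrix.of fun i j => if (i : ℕ) = (j : ℕ) then 1 else 0

/-- Frobenius norm of a real matrix. -/
def frob {a b : ℕ} (M : Matrix (Fin a) (Fin b) ℝ) : ℝ :=
  Real.sqrt (∑ i, ∑ j, (M i j) ^ 2)

/-- Euclidean norm of a vector. -/
def enorm2 {a : ℕ} (v : Fin a → ℝ) : ℝ :=
  Real.sqrt (∑ i, (v i) ^ 2)

/-- `X` is the cluster-indicator matrix of the partition of `Fin n` into the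
(nonempty) fibers of the surjective map `f : Fin n → Fin k`. -/
def IsIndicatorOf {n k : ℕ} (f : Fin n → Fin k) (X : Matrix (Fin n) (Fin k) ℝ) : Prop :=
  Function.Surjective f ∧
    ∀ i j, X i j =
      if f i = j then 1 / Real.sqrt ((Finset.univ.filter fun i' => f i' = j).card) else 0

/-- `X` is a cluster-indicator matrix of a partition into `k` nonempty clusters. -/
def IsIndicator {n k : ℕ} (X : Matrix (Fin n) (Fin k) ℝ) : Prop :=
  ∃ f : Fin n → Fin k, IsIndicatorOf f X

/-- The k-means cost of the assignment `X` on the feature matrix `M`. -/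
def kmeansCost {n k m : ℕ} (M : Matrix (Fin n) (Fin m) ℝ)
    (X : Matrix (Fin n) (Fin k) ℝ) : ℝ :=
  frob (M - X * Xᵀ * M)

/-- `X` minimizes the k-means cost on features `M` over all indicator matrices. -/
def IsOptAssign {n k m : ℕ} (M : Matrix (Fin n) (Fin m) ℝ)
    (X : Matrix (Fin n) (Fin k) ℝ) : Prop :=
  IsIndicator X ∧
    ∀ Y : Matrix (Fin n) (Fin k) ℝ, IsIndicator Y → kmeansCost M X ≤ kmeansCost M Y

/-- Law of an `n × d` random matrix with i.i.d. Gaussian entries of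
mean `0` and variance `1 / d`. -/
def gaussMeasure (n d : ℕ) : Measure (Fin n → Fin d → ℝ) :=
  Measure.pi fun _ => Measure.pi fun _ => gaussianReal 0 (d : NNReal)⁻¹

lemma frob_sq {a b : ℕ} (M : Matrix (Fin a) (Fin b) ℝ) : frob M ^ 2 = trace (M * Mᵀ) := by
  rw [frob, Real.sq_sqrt (by positivity)]
  simp [Matrix.trace, Matrix.mul_apply, sq]

lemma frob_nonneg {a b : ℕ} (M : Matrix (Fin a) (Fin b) ℝ) : 0 ≤ frob M :=
  Real.sqrt_nonneg _

lemma frob_eq_sqrt_of_transpose_mul_self {a b : ℕ} {M : Matrix (Fin a) (Fin b) ℝ}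
    (hM : Mᵀ * M = 1) : frob M = Real.sqrt b := by
  rw [← Real.sqrt_sq (frob_nonneg M), frob_sq, trace_mul_comm, hM, trace_one, Fintype.card_fin]

lemma rectId_eq_submatrix {n k : ℕ} (hkn : k ≤ n) :
    rectId n k = (1 : Matrix (Fin n) (Fin n) ℝ).submatrix id (Fin.castLE hkn) := by
  ext i j
  simp [rectId, Matrix.one_apply, Fin.ext_iff]

lemma rectId_transpose_mul_self {n k : ℕ} (hkn : k ≤ n) : (rectId n k)ᵀ * rectId n k = 1 := by
  rw [rectId_eq_submatrix hkn, transpose_submatrix, transpose_one,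
    ← submatrix_mul _ _ _ _ _ Function.bijective_id, Matrix.one_mul,
    submatrix_one _ (Fin.castLE_injective hkn)]

lemma transpose_mul_self_of_mul_rectId {n k : ℕ} (hkn : k ≤ n) {U : Matrix (Fin n) (Fin n) ℝ}
    (hU : Uᵀ * U = 1) : (U * rectId n k)ᵀ * (U * rectId n k) = 1 := by
  rw [transpose_mul, Matrix.mul_assoc, ← Matrix.mul_assoc Uᵀ, hU, Matrix.one_mul,
    rectId_transpose_mul_self hkn]

section Spectral

variable {m n : Type*} [Fintype m] [Fintype n]

lemma trace_mul_transpose_eq_sum_sq (B : Matrix m n ℝ) :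
    trace (B * Bᵀ) = ∑ i, ∑ j, B i j ^ 2 := by
  simp [Matrix.trace, Matrix.mul_apply, sq]

lemma trace_mul_diagonal_mul_transpose [DecidableEq n] (B : Matrix m n ℝ) (w : n → ℝ) :
    trace (B * diagonal w * Bᵀ) = ∑ i, ∑ j, w j * B i j ^ 2 := by
  simp only [Matrix.trace, Matrix.diag, Matrix.mul_apply (M := B * diagonal w),
    Matrix.mul_diagonal, Matrix.transpose_apply]
  exact Finset.sum_congr rfl fun i _ => Finset.sum_congr rfl fun j _ => by ring

namespace Matrix.IsHermitian

variable [DecidableEq n] {S : Matrix n n ℝ} (hS : S.IsHermitian) (A : Matrix m n ℝ)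

lemma eigenvectorUnitary_mul_transpose :
    (hS.eigenvectorUnitary : Matrix n n ℝ) * (hS.eigenvectorUnitary : Matrix n n ℝ)ᵀ = 1 := by
  simpa [Matrix.star_eq_conjTranspose] using
    (Matrix.mem_unitaryGroup_iff.mp hS.eigenvectorUnitary.2)

lemma eq_eigenvectorUnitary_mul_diagonal :
    S = (hS.eigenvectorUnitary : Matrix n n ℝ) * diagonal hS.eigenvalues *
      (hS.eigenvectorUnitary : Matrix n n ℝ)ᵀ := by
  simpa [Unitary.conjStarAlgAut_apply, Matrix.star_eq_conjTranspose] using hS.spectral_theorem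

lemma trace_mul_mul_transpose_eq :
    trace (A * S * Aᵀ) =
      ∑ i, ∑ j, hS.eigenvalues j * (A * (hS.eigenvectorUnitary : Matrix n n ℝ)) i j ^ 2 := by
  rw [← trace_mul_diagonal_mul_transpose, transpose_mul]
  conv_lhs => rw [hS.eq_eigenvectorUnitary_mul_diagonal]
  simp only [Matrix.mul_assoc]

lemma trace_mul_transpose_eq :
    trace (A * Aᵀ) = ∑ i, ∑ j, (A * (hS.eigenvectorUnitary : Matrix n n ℝ)) i j ^ 2 := by
  rw [← trace_mul_transpose_eq_sum_sq, transpose_mul, Matrix.mul_assoc,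
    ← Matrix.mul_assoc _ _ Aᵀ, hS.eigenvectorUnitary_mul_transpose, Matrix.one_mul]

lemma trace_mul_mul_transpose_le {C : ℝ} (hC : ∀ j, hS.eigenvalues j ≤ C) :
    trace (A * S * Aᵀ) ≤ C * trace (A * Aᵀ) := by
  rw [hS.trace_mul_mul_transpose_eq, hS.trace_mul_transpose_eq, Finset.mul_sum]
  gcongr with i _
  rw [Finset.mul_sum]
  gcongr with j _
  exact hC j

lemma le_trace_mul_mul_transpose {c : ℝ} (hc : ∀ j, c ≤ hS.eigenvalues j) :
    c * trace (A * Aᵀ) ≤ trace (A * S * Aᵀ) := by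
  rw [hS.trace_mul_mul_transpose_eq, hS.trace_mul_transpose_eq, Finset.mul_sum]
  gcongr with i _
  rw [Finset.mul_sum]
  gcongr with j _
  exact hc j

end Matrix.IsHermitian

end Spectral

section Singular

variable {a k m : ℕ} (A : Matrix (Fin a) (Fin k) ℝ) {B : Matrix (Fin k) (Fin m) ℝ}
  (hB : (B * Bᵀ).IsHermitian)

lemma frob_mul_sq : frob (A * B) ^ 2 = trace (A * (B * Bᵀ) * Aᵀ) := by
  rw [frob_sq, transpose_mul]
  simp only [Matrix.mul_assoc]

lemma frob_mul_le {C : ℝ} (hC : 0 ≤ C) (h : ∀ i, Real.sqrt (hB.eigenvalues i) ≤ C) :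
    frob (A * B) ≤ C * frob A := by
  have hsq : frob (A * B) ^ 2 ≤ (C * frob A) ^ 2 := by
    rw [frob_mul_sq, mul_pow, frob_sq]
    exact hB.trace_mul_mul_transpose_le A fun i => (Real.sqrt_le_iff.mp (h i)).2
  exact (sq_le_sq₀ (frob_nonneg _) (mul_nonneg hC (frob_nonneg _))).mp hsq

lemma le_frob_mul {c : ℝ} (h : ∀ i, c ≤ Real.sqrt (hB.eigenvalues i)) :
    c * frob A ≤ frob (A * B) := by
  rcases le_or_gt c 0 with hc | hc
  · exact (mul_nonpos_of_nonpos_of_nonneg hc (frob_nonneg A)).trans (frob_nonneg _)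
  have hsq : (c * frob A) ^ 2 ≤ frob (A * B) ^ 2 := by
    rw [frob_mul_sq, mul_pow, frob_sq]
    exact hB.le_trace_mul_mul_transpose A fun i => (Real.le_sqrt' hc).mp (h i)
  exact (sq_le_sq₀ (mul_nonneg hc.le (frob_nonneg _)) (frob_nonneg _)).mp hsq

end Singular

section KMeans

variable {n k m : ℕ}

lemma kmeansCost_sq_add_frob_sq (M : Matrix (Fin n) (Fin m) ℝ) {X : Matrix (Fin n) (Fin k) ℝ}
    (hX : Xᵀ * X = 1) : kmeansCost M X ^ 2 + frob (Xᵀ * M) ^ 2 = frob M ^ 2 := by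
  have hXX : ∀ N : Matrix (Fin k) (Fin m) ℝ, Xᵀ * (X * N) = N := fun N => by
    rw [← Matrix.mul_assoc, hX, Matrix.one_mul]
  have key : (M - X * Xᵀ * M)ᵀ * (M - X * Xᵀ * M) + (Xᵀ * M)ᵀ * (Xᵀ * M) = Mᵀ * M := by
    simp only [transpose_sub, transpose_mul, transpose_transpose, Matrix.sub_mul,
      Matrix.mul_sub, Matrix.mul_assoc, hXX]
    abel
  rw [kmeansCost, frob_sq, frob_sq, frob_sq, trace_mul_comm, trace_mul_comm (Xᵀ * M),
    trace_mul_comm M, ← trace_add, key]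

lemma kmeansCost_le_frob (M : Matrix (Fin n) (Fin m) ℝ) {X : Matrix (Fin n) (Fin k) ℝ}
    (hX : Xᵀ * X = 1) : kmeansCost M X ≤ frob M := by
  refine (sq_le_sq₀ (frob_nonneg _) (frob_nonneg _)).mp ?_
  rw [← kmeansCost_sq_add_frob_sq M hX]
  exact le_add_of_nonneg_right (sq_nonneg _)

lemma kmeansCost_mul (M : Matrix (Fin n) (Fin m) ℝ) {p : ℕ} (N : Matrix (Fin m) (Fin p) ℝ)
    (X : Matrix (Fin n) (Fin k) ℝ) : kmeansCost (M * N) X = frob ((M - X * Xᵀ * M) * N) := by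
  rw [kmeansCost, Matrix.sub_mul]
  simp only [Matrix.mul_assoc]

end KMeans

section Clusters

variable {n k m : ℕ} {f : Fin n → Fin k} {X : Matrix (Fin n) (Fin k) ℝ}

def cluster (f : Fin n → Fin k) (j : Fin k) : Finset (Fin n) :=
  Finset.univ.filter fun i => f i = j

def clusterMean (f : Fin n → Fin k) (M : Matrix (Fin n) (Fin m) ℝ) (j : Fin k) (l : Fin m) : ℝ :=
  (∑ i ∈ cluster f j, M i l) / (#(cluster f j) : ℝ)

lemma IsIndicatorOf.card_cluster_pos (h : IsIndicatorOf f X) (j : Fin k) :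
    (0 : ℝ) < #(cluster f j) := by
  obtain ⟨i, hi⟩ := h.1 j
  exact_mod_cast Finset.card_pos.mpr ⟨i, by simp [cluster, hi]⟩

lemma IsIndicatorOf.apply_mul_apply (h : IsIndicatorOf f X) (i i' : Fin n) (j : Fin k) :
    X i j * X i' j = if f i = j ∧ f i' = j then (#(cluster f j) : ℝ)⁻¹ else 0 := by
  rw [h.2, h.2]
  split_ifs <;> simp_all [cluster, ← mul_inv]

lemma IsIndicatorOf.transpose_mul_self (h : IsIndicatorOf f X) : Xᵀ * X = 1 := by
  ext j j'
  rw [mul_apply]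
  by_cases hjj : j = j'
  · subst hjj
    simp only [transpose_apply, h.apply_mul_apply, and_self, one_apply_eq]
    rw [← Finset.sum_filter, Finset.sum_const, nsmul_eq_mul]
    exact mul_inv_cancel₀ (h.card_cluster_pos j).ne'
  · rw [one_apply_ne hjj]
    refine Finset.sum_eq_zero fun i _ => ?_
    rw [transpose_apply, h.2, h.2]
    split_ifs with hj hj' <;> simp_all

lemma IsIndicatorOf.mul_transpose_apply (h : IsIndicatorOf f X) (i i' : Fin n) :
    (X * Xᵀ) i i' = if f i' = f i then (#(cluster f (f i)) : ℝ)⁻¹ else 0 := by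
  simp only [mul_apply, transpose_apply, h.apply_mul_apply, ite_and, Finset.sum_ite_eq,
    Finset.mem_univ, if_true]

lemma IsIndicatorOf.mul_transpose_mul_apply (h : IsIndicatorOf f X)
    (M : Matrix (Fin n) (Fin m) ℝ) (i : Fin n) (l : Fin m) :
    (X * Xᵀ * M) i l = clusterMean f M (f i) l := by
  simp only [mul_apply (M := X * Xᵀ), h.mul_transpose_apply, ite_mul, zero_mul]
  rw [← Finset.sum_filter, ← Finset.mul_sum, clusterMean, div_eq_inv_mul]
  rfl

lemma IsIndicatorOf.kmeansCost_sq (h : IsIndicatorOf f X) (M : Matrix (Fin n) (Fin m) ℝ) :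
    kmeansCost M X ^ 2 =
      ∑ j, ∑ i ∈ cluster f j, enorm2 (fun l => M i l - clusterMean f M j l) ^ 2 := by
  rw [kmeansCost, frob, Real.sq_sqrt (by positivity), ← Finset.sum_fiberwise Finset.univ f]
  refine Finset.sum_congr rfl fun j _ => Finset.sum_congr rfl fun i hi => ?_
  rw [enorm2, Real.sq_sqrt (by positivity), (Finset.mem_filter.mp hi).2.symm]
  simp only [Matrix.sub_apply, h.mul_transpose_mul_apply]

lemma IsIndicatorOf.sqrt_mul_sqrt_le_kmeansCost (h : IsIndicatorOf f X)
    (M : Matrix (Fin n) (Fin m) ℝ) {s : ℝ}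
    (hs : ∀ j, s ≤ ∑ i ∈ cluster f j, enorm2 (fun l => M i l - clusterMean f M j l) ^ 2) :
    Real.sqrt k * Real.sqrt s ≤ kmeansCost M X := by
  rw [← Real.sqrt_mul (Nat.cast_nonneg k)]
  refine Real.sqrt_le_iff.mpr ⟨frob_nonneg _, ?_⟩
  calc (k : ℝ) * s = ∑ _j : Fin k, s := by simp
    _ ≤ kmeansCost M X ^ 2 := by
        rw [h.kmeansCost_sq]
        exact Finset.sum_le_sum fun j _ => hs j

end Clusters

lemma le_mul_one_add_of_one_sub_mul_le {a b ε K σ : ℝ} (hε : 0 ≤ ε) (hσ : 0 < σ)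
    (h : (1 - ε) * a ≤ (1 + ε) * b) (ha : a ≤ K) (hb : b ≤ K) (hK : K * σ ≤ b) :
    a ≤ b * (1 + 2 * ε / σ) := by
  have hKb : K ≤ b / σ := (le_div_iff₀ hσ).mpr hK
  calc a ≤ b + ε * (a + b) := by linarith
    _ ≤ b + ε * (2 * (b / σ)) := by gcongr; linarith
    _ = b * (1 + 2 * ε / σ) := by ring

theorem statement9_general {n k d : ℕ} (hnk : k ≤ n) (t s : ℝ)
    (ht : 0 ≤ t) (hs : 0 < s)
    (U : Matrix (Fin n) (Fin n) ℝ) (hU : Uᵀ * U = 1)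
    (R : Matrix (Fin n) (Fin d) ℝ)
    (Φ : Matrix (Fin n) (Fin k) ℝ) (hΦ : Φ = U * rectId n k)
    (Ψ : Matrix (Fin n) (Fin d) ℝ) (hΨ : Ψ = Φ * Φᵀ * R)
    (hH : (Φᵀ * R * (Φᵀ * R)ᵀ).IsHermitian)
    (hsing : ∀ i : Fin k,
      |Real.sqrt (hH.eigenvalues i) - 1| ≤ (Real.sqrt k + t) / Real.sqrt d)
    (f : Fin n → Fin k) (XΦ : Matrix (Fin n) (Fin k) ℝ)
    (hXf : IsIndicatorOf f XΦ)
    (μ : Fin k → Fin k → ℝ)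
    (hμ : ∀ j l, μ j l =
      (∑ i ∈ Finset.univ.filter fun i' => f i' = j, Φ i l) /
        ((Finset.univ.filter fun i' => f i' = j).card : ℝ))
    (hspread : ∀ j : Fin k,
      s ≤ ∑ i ∈ Finset.univ.filter fun i' => f i' = j,
        enorm2 (fun l => Φ i l - μ j l) ^ 2)
    (XΨ : Matrix (Fin n) (Fin k) ℝ) (hXΨ : IsOptAssign Ψ XΨ) :
    kmeansCost Φ XΨ ≤
      kmeansCost Φ XΦ * (1 + 2 * (Real.sqrt k + t) / Real.sqrt (s * d)) := by
  set ε := (Real.sqrt k + t) / Real.sqrt d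
  obtain ⟨g, hg⟩ := hXΨ.1
  have hperturb : (1 - ε) * kmeansCost Φ XΨ ≤ (1 + ε) * kmeansCost Φ XΦ :=
    calc (1 - ε) * kmeansCost Φ XΨ ≤ kmeansCost Ψ XΨ := by
          rw [hΨ, Matrix.mul_assoc, kmeansCost_mul]
          exact le_frob_mul _ hH fun i => by linarith [(abs_le.mp (hsing i)).1]
      _ ≤ kmeansCost Ψ XΦ := hXΨ.2 XΦ ⟨f, hXf⟩
      _ ≤ (1 + ε) * kmeansCost Φ XΦ := by
          rw [hΨ, Matrix.mul_assoc, kmeansCost_mul]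
          exact frob_mul_le _ hH (by positivity) fun i => by linarith [(abs_le.mp (hsing i)).2]
  have hfrobΦ : frob Φ = Real.sqrt k :=
    frob_eq_sqrt_of_transpose_mul_self (hΦ ▸ transpose_mul_self_of_mul_rectId hnk hU)
  obtain rfl : μ = clusterMean f Φ := funext₂ hμ
  rw [show 2 * (Real.sqrt k + t) / Real.sqrt (s * d) = 2 * ε / Real.sqrt s by
    rw [Real.sqrt_mul hs.le]; ring]
  exact le_mul_one_add_of_one_sub_mul_le (by positivity) (Real.sqrt_pos.mpr hs) hperturb
    (hfrobΦ ▸ kmeansCost_le_frob Φ hg.transpose_mul_self)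
    (hfrobΦ ▸ kmeansCost_le_frob Φ hXf.transpose_mul_self)
    (hXf.sqrt_mul_sqrt_le_kmeansCost Φ hspread)

/-- multiplicative bound `C_Ψ ≤ C_Φ (1 + 2(√k + t)/√(s d))` under a
singular-value condition and a per-cluster spread `≥ s` condition on the SC optimum. -/
theorem statement9 {n k d : ℕ} (hnk : k ≤ n) (hkd : k ≤ d) (t s : ℝ)
    (ht : 0 ≤ t) (hs : 0 < s)
    (U : Matrix (Fin n) (Fin n) ℝ) (hU : Uᵀ * U = 1)
    (R : Matrix (Fin n) (Fin d) ℝ)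
    (Φ : Matrix (Fin n) (Fin k) ℝ) (hΦ : Φ = U * rectId n k)
    (Ψ : Matrix (Fin n) (Fin d) ℝ) (hΨ : Ψ = Φ * Φᵀ * R)
    (hH : (Φᵀ * R * (Φᵀ * R)ᵀ).IsHermitian)
    (hsing : ∀ i : Fin k,
      |Real.sqrt (hH.eigenvalues i) - 1| ≤ (Real.sqrt k + t) / Real.sqrt d)
    (f : Fin n → Fin k) (XΦ : Matrix (Fin n) (Fin k) ℝ)
    (hXf : IsIndicatorOf f XΦ) (hXΦ : IsOptAssign Φ XΦ)
    (μ : Fin k → Fin k → ℝ)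
    (hμ : ∀ j l, μ j l =
      (∑ i ∈ Finset.univ.filter fun i' => f i' = j, Φ i l) /
        ((Finset.univ.filter fun i' => f i' = j).card : ℝ))
    (hspread : ∀ j : Fin k,
      s ≤ ∑ i ∈ Finset.univ.filter fun i' => f i' = j,
        enorm2 (fun l => Φ i l - μ j l) ^ 2)
    (XΨ : Matrix (Fin n) (Fin k) ℝ) (hXΨ : IsOptAssign Ψ XΨ) :
    kmeansCost Φ XΨ ≤
      kmeansCost Φ XΦ * (1 + 2 * (Real.sqrt k + t) / Real.sqrt (s * d)) :=
  statement9_general hnk t s ht hs U hU R Φ hΦ Ψ hΨ hH hsing f XΦ hXf μ hμ hspread XΨ hXΨ
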